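/- Let χ : ℝ₊ → ℝ be a kernel in the class φ, let r ∈ ℕ, and let f : ℝ₊ → ℝ be a bounded, log-uniformly continuous function on ℝ₊ (i.e., for every ε > 0 there exists δ > 0 such that |f(u) − f(v)| < ε whenever |log u − log v| ≤ δ). Then lim_{w → ∞} ‖E_{w,r}^χ f − f‖_∞ = 0, where ‖·‖_∞ is the sup-norm on ℝ₊. -/

import Mathlib

open MeasureTheory Filter Set

/-- The Haar measure `dx/x` on `(0, ∞)`, as a measure on `ℝ`. -/
noncomputable def mulHaar : Measure ℝ :=
  (volume.restrict (Set.Ioi (0:ℝ))).withDensity fun x => ENNReal.ofReal x⁻¹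

/-- Sup-norm of `f` over `(0, ∞)`. -/
noncomputable def supNorm (f : ℝ → ℝ) : ℝ :=
  ⨆ x : Set.Ioi (0:ℝ), |f (x : ℝ)|

/-- The `L^p` norm with respect to the measure `dx/x` on `(0, ∞)`. -/
noncomputable def lpNorm (p : ℝ) (g : ℝ → ℝ) : ℝ :=
  (∫ x, |g x| ^ p ∂mulHaar) ^ (1 / p)

/-- Logarithmic difference of order `m`: `Δ_h^m f (x) = ∑_{j=0}^m (-1)^{m-j} C(m,j) f (x h^j)`. -/
noncomputable def logDiff (m : ℕ) (f : ℝ → ℝ) (h x : ℝ) : ℝ :=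
  ∑ j ∈ Finset.range (m + 1), (-1 : ℝ) ^ (m - j) * (m.choose j : ℝ) * f (x * h ^ j)

/-- Logarithmic modulus of smoothness of order `m`. -/
noncomputable def logModulus (m : ℕ) (f : ℝ → ℝ) (δ : ℝ) : ℝ :=
  ⨆ h : {h : ℝ // 0 < Real.log h ∧ Real.log h ≤ δ},
    supNorm fun x => logDiff m f (h : ℝ) x

/-- The Mellin–Steklov integral of order `r`:
`F_{r,h}(x) = (-log h)^{-r} ∫₁^h ⋯ ∫₁^h ∑_{m=1}^r (-1)^{r-m+1} C(r,m)
  f (x (t₁⋯t_r)^{m/r}) dt₁/t₁ ⋯ dt_r/t_r`. -/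
noncomputable def mellinSteklov (r : ℕ) (f : ℝ → ℝ) (h : ℝ) (x : ℝ) : ℝ :=
  ((-Real.log h) ^ r)⁻¹ *
    ∫ t : Fin r → ℝ in Set.univ.pi fun _ => Set.Icc 1 h,
      (∑ m ∈ Finset.Icc 1 r,
        (-1 : ℝ) ^ ((r : ℤ) - (m : ℤ) + 1) * (r.choose m : ℝ) *
          f (x * (∏ i, t i) ^ ((m : ℝ) / (r : ℝ)))) * ∏ i, (t i)⁻¹

/-- `M₀(χ) = sup_{u > 0} ∑_{k ∈ ℤ} |χ(e^{-k} u)|`. -/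
noncomputable def M0 (χ : ℝ → ℝ) : ℝ :=
  ⨆ u : Set.Ioi (0:ℝ), ∑' k : ℤ, |χ (Real.exp (-(k : ℝ)) * (u : ℝ))|

/-- The Mellin–Steklov exponential sampling operator of order `r`:
`(E_{w,r}^χ f)(x) = ∑_{k ∈ ℤ} χ(e^{-k} x^w) F_{r, e^{1/w}}(e^{k/w})`. -/
noncomputable def samplingOp (χ : ℝ → ℝ) (r : ℕ) (f : ℝ → ℝ) (w : ℝ) (x : ℝ) : ℝ :=
  ∑' k : ℤ, χ (Real.exp (-(k : ℝ)) * x ^ w) *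
    mellinSteklov r f (Real.exp (1 / w)) (Real.exp ((k : ℝ) / w))

/-- The kernel class `φ`: continuity together with conditions (χ₁), (χ₂), (χ₃). -/
structure IsKernel (χ : ℝ → ℝ) : Prop where
  cont : ContinuousOn χ (Set.Ioi 0)
  integrable : Integrable χ mulHaar
  bddOnIcc : ∃ C, ∀ x ∈ Set.Icc (Real.exp (-1)) (Real.exp 1), |χ x| ≤ C
  summable_abs : ∀ u : ℝ, 0 < u → Summable fun k : ℤ => |χ (Real.exp (-(k : ℝ)) * u)|
  sum_eq_one : ∀ u : ℝ, 0 < u → ∑' k : ℤ, χ (Real.exp (-(k : ℝ)) * u) = 1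
  m0_bdd : BddAbove (Set.range fun u : Set.Ioi (0:ℝ) =>
    ∑' k : ℤ, |χ (Real.exp (-(k : ℝ)) * (u : ℝ))|)
  decay : Tendsto (fun γ : ℝ => ⨆ u : Set.Ioi (0:ℝ),
      ∑' k : {k : ℤ // γ < |(k : ℝ) - Real.log (u : ℝ)|},
        |χ (Real.exp (-((k : ℤ) : ℝ)) * (u : ℝ))|)
    atTop (nhds 0)

open Topology

/-!
Because `∑ₖ χ(e^{-k} u) = 1`, the error `E_{w,r}^χ f(x) - f(x)` is
`∑ₖ χ(e^{-k} x^w) (F_{r,h}(e^{k/w}) - f(x))` with `h = e^{1/w}`. Up to the sign `(-1)^r`, the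
Mellin–Steklov integral `F_{r,h}(y)` is an average of `∑_{m=1}^r (-1)^{r-m+1} C(r,m) f(y p^{m/r})`
against the probability density `∏ᵢ tᵢ⁻¹ / (log h)^r` on `[1, h]^r`; as the signed binomial
coefficients `(-1)^{r-j} C(r,j)` sum to zero, it lies within `2^r ε` of `f(y)` as soon as `f`
oscillates by at most `ε` over logarithmic distance `r log h = r / w`. The sum over `k` is then
split at `|k - w log x| = γ`: condition (χ₃) makes the far terms small against the bound on `f`,
and for the near terms `|k/w - log x| ≤ γ/w`, so log-uniform continuity applies with total weight
at most `M₀(χ)`.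
-/

theorem sum_range_neg_one_pow_sub_mul_choose {r : ℕ} (hr : r ≠ 0) :
    ∑ j ∈ Finset.range (r + 1), (-1 : ℝ) ^ (r - j) * r.choose j = 0 := by
  simpa [hr] using (add_pow (1 : ℝ) (-1) r).symm

theorem abs_neg_one_pow_mul_sum_Icc_sub_le {r : ℕ} (hr : 0 < r) {g : ℕ → ℝ} {ε : ℝ}
    (hg : ∀ j ≤ r, |g j - g 0| ≤ ε) :
    |(-1 : ℝ) ^ r * ∑ m ∈ Finset.Icc 1 r,
        (-1 : ℝ) ^ ((r : ℤ) - (m : ℤ) + 1) * (r.choose m : ℝ) * g m - g 0| ≤ 2 ^ r * ε := by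
  have hsign : ∀ m ∈ Finset.Icc 1 r, (-1 : ℝ) ^ ((r : ℤ) - (m : ℤ) + 1) * r.choose m * g m
      = -((-1 : ℝ) ^ (r - m) * r.choose m * g m) := by
    intro m hm
    have : (r : ℤ) - m + 1 = ((r - m + 1 : ℕ) : ℤ) := by
      push_cast [(Finset.mem_Icc.1 hm).2]; ring
    rw [this, zpow_natCast, pow_succ]
    ring
  have hrange : Finset.range (r + 1) = insert 0 (Finset.Icc 1 r) := by
    ext j; simp only [Finset.mem_range, Finset.mem_insert, Finset.mem_Icc]; omega
  have hsum : ∑ j ∈ Finset.range (r + 1), (-1 : ℝ) ^ (r - j) * r.choose j * (g j - g 0)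
      = (-1) ^ r * g 0 + ∑ m ∈ Finset.Icc 1 r, (-1 : ℝ) ^ (r - m) * r.choose m * g m := by
    have hcentre := sum_range_neg_one_pow_sub_mul_choose hr.ne'
    simp_rw [mul_sub, Finset.sum_sub_distrib, ← Finset.sum_mul, hcentre, zero_mul, sub_zero,
      hrange, Finset.sum_insert (by simp : 0 ∉ Finset.Icc 1 r)]
    simp
  have hsq : ((-1 : ℝ) ^ r) ^ 2 = 1 := by rw [← pow_mul, pow_mul']; norm_num
  have hexpand : (-1 : ℝ) ^ r * ∑ m ∈ Finset.Icc 1 r,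
        (-1 : ℝ) ^ ((r : ℤ) - (m : ℤ) + 1) * (r.choose m : ℝ) * g m - g 0
      = -((-1) ^ r *
          ∑ j ∈ Finset.range (r + 1), (-1 : ℝ) ^ (r - j) * r.choose j * (g j - g 0)) := by
    rw [Finset.sum_congr rfl hsign, Finset.sum_neg_distrib, hsum]
    linear_combination g 0 * hsq
  rw [hexpand, abs_neg, abs_mul, abs_pow, abs_neg, abs_one, one_pow, one_mul]
  calc |∑ j ∈ Finset.range (r + 1), (-1 : ℝ) ^ (r - j) * r.choose j * (g j - g 0)|
      ≤ ∑ j ∈ Finset.range (r + 1), (r.choose j : ℝ) * ε := by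
        refine (Finset.abs_sum_le_sum_abs _ _).trans (Finset.sum_le_sum fun j hj => ?_)
        rw [abs_mul, abs_mul, abs_pow, abs_neg, abs_one, one_pow, one_mul, Nat.abs_cast]
        exact mul_le_mul_of_nonneg_left (hg j (Nat.lt_succ_iff.1 (Finset.mem_range.1 hj)))
          (by positivity)
    _ = 2 ^ r * ε := by
        rw [← Finset.sum_mul, ← Nat.cast_sum, Nat.sum_range_choose, Nat.cast_pow, Nat.cast_ofNat]

theorem setIntegral_univ_pi_prod_eq_pow {ι E : Type*} [Fintype ι] [MeasureSpace E]
    [SigmaFinite (volume : Measure E)] (g : E → ℝ) (s : Set E) :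
    ∫ t : ι → E in univ.pi fun _ => s, ∏ i, g (t i) = (∫ t in s, g t) ^ Fintype.card ι := by
  rw [volume_pi, Measure.restrict_pi_pi, integral_fintype_prod_eq_pow]

theorem setIntegral_univ_pi_Icc_prod_inv {ι : Type*} [Fintype ι] {h : ℝ} (hh : 1 ≤ h) :
    ∫ t : ι → ℝ in univ.pi fun _ => Icc 1 h, ∏ i, (t i)⁻¹ = Real.log h ^ Fintype.card ι := by
  rw [setIntegral_univ_pi_prod_eq_pow, integral_Icc_eq_integral_Ioc,
    ← intervalIntegral.integral_of_le hh, integral_inv_of_pos one_pos (by linarith), div_one]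

theorem abs_inv_mul_setIntegral_mul_sub_le {α : Type*} [MeasurableSpace α] {μ : Measure α}
    {s : Set α} (hs : MeasurableSet s) {S P : α → ℝ} {c ε : ℝ}
    (hSP : IntegrableOn (fun t => S t * P t) s μ) (hP : IntegrableOn P s μ)
    (hP0 : ∀ t ∈ s, 0 ≤ P t) (hPpos : 0 < ∫ t in s, P t ∂μ) (hS : ∀ t ∈ s, |S t - c| ≤ ε) :
    |(∫ t in s, P t ∂μ)⁻¹ * ∫ t in s, S t * P t ∂μ - c| ≤ ε := by
  have hcentre : (∫ t in s, P t ∂μ)⁻¹ * ∫ t in s, S t * P t ∂μ - c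
      = (∫ t in s, P t ∂μ)⁻¹ * ∫ t in s, (S t - c) * P t ∂μ := by
    simp_rw [sub_mul]
    rw [integral_sub hSP (hP.const_mul c), integral_const_mul]
    field_simp
  have hbound : ∀ᵐ t ∂μ.restrict s, ‖(S t - c) * P t‖ ≤ ε * P t :=
    ae_restrict_of_forall_mem hs fun t ht => by
      rw [Real.norm_eq_abs, abs_mul, abs_of_nonneg (hP0 t ht)]
      exact mul_le_mul_of_nonneg_right (hS t ht) (hP0 t ht)
  rw [hcentre, abs_mul, abs_inv, abs_of_pos hPpos, inv_mul_le_iff₀ hPpos, mul_comm,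
    ← integral_const_mul]
  exact norm_integral_le_of_norm_le (hP.const_mul ε) hbound

theorem one_le_prod_and_prod_le_pow_of_mem_univ_pi_Icc {ι : Type*} [Fintype ι] {h : ℝ}
    {t : ι → ℝ} (ht : t ∈ univ.pi fun _ => Icc 1 h) :
    1 ≤ ∏ i, t i ∧ ∏ i, t i ≤ h ^ Fintype.card ι := by
  have hmem : ∀ i, t i ∈ Icc 1 h := fun i => ht i (mem_univ i)
  refine ⟨Finset.one_le_prod fun i _ => (hmem i).1, ?_⟩
  calc ∏ i, t i ≤ ∏ _i : ι, h :=
        Finset.prod_le_prod (fun i _ => zero_le_one.trans (hmem i).1) fun i _ => (hmem i).2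
    _ = h ^ Fintype.card ι := Finset.prod_const h

theorem abs_log_mul_rpow_sub_log_le {y p q : ℝ} (hy : 0 < y) (hp : 1 ≤ p) (hq0 : 0 ≤ q)
    (hq1 : q ≤ 1) : |Real.log (y * p ^ q) - Real.log y| ≤ Real.log p := by
  have hp0 : 0 < p := zero_lt_one.trans_le hp
  have hlogp : 0 ≤ Real.log p := Real.log_nonneg hp
  rw [Real.log_mul hy.ne' (Real.rpow_pos_of_pos hp0 q).ne', Real.log_rpow hp0, add_sub_cancel_left,
    abs_of_nonneg (mul_nonneg hq0 hlogp)]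
  exact mul_le_of_le_one_left hlogp hq1

theorem abs_mellinSteklov_sub_le {r : ℕ} (hr : 0 < r) {f : ℝ → ℝ} (hf : ContinuousOn f (Ioi 0))
    {h y ε : ℝ} (hh : 1 < h) (hy : 0 < y)
    (hfy : ∀ z, 0 < z → |Real.log z - Real.log y| ≤ r * Real.log h → |f z - f y| ≤ ε) :
    |mellinSteklov r f h y - f y| ≤ 2 ^ r * ε := by
  set B : Set (Fin r → ℝ) := univ.pi fun _ => Icc 1 h
  set S : (Fin r → ℝ) → ℝ := fun t => ∑ m ∈ Finset.Icc 1 r,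
    (-1 : ℝ) ^ ((r : ℤ) - (m : ℤ) + 1) * (r.choose m : ℝ) * f (y * (∏ i, t i) ^ ((m : ℝ) / r))
  set P : (Fin r → ℝ) → ℝ := fun t => ∏ i, (t i)⁻¹
  have hB : IsCompact B := isCompact_univ_pi fun _ => isCompact_Icc
  have hprod_pos : ∀ t ∈ B, 0 < ∏ i, t i := fun t ht =>
    zero_lt_one.trans_le (one_le_prod_and_prod_le_pow_of_mem_univ_pi_Icc ht).1
  have hS : ContinuousOn S B := by
    refine continuousOn_finsetSum _ fun m _ => continuousOn_const.mul (hf.comp ?_ ?_)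
    · exact continuousOn_const.mul ((continuous_finsetProd _ fun i _ =>
        continuous_apply i).continuousOn.rpow_const fun _ _ => Or.inr (by positivity))
    · exact fun t ht => mul_pos hy (Real.rpow_pos_of_pos (hprod_pos t ht) _)
  have hP : ContinuousOn P B := continuousOn_finsetProd _ fun i _ =>
    (continuous_apply i).continuousOn.inv₀ fun t ht =>
      (zero_lt_one.trans_le (ht i (mem_univ i)).1).ne'
  have hPint : ∫ t in B, P t = Real.log h ^ r := by
    rw [setIntegral_univ_pi_Icc_prod_inv hh.le, Fintype.card_fin]
  have hsteklov : mellinSteklov r f h y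
      = (∫ t in B, P t)⁻¹ * ∫ t in B, ((-1) ^ r * S t) * P t := by
    simp_rw [hPint, mul_assoc, integral_const_mul]
    rw [mellinSteklov, neg_pow, mul_inv, ← inv_pow, inv_neg_one]
    ring
  rw [hsteklov]
  refine abs_inv_mul_setIntegral_mul_sub_le (MeasurableSet.univ_pi fun _ => measurableSet_Icc)
    ((continuousOn_const.mul hS).mul hP |>.integrableOn_compact hB) (hP.integrableOn_compact hB)
    (fun t ht => Finset.prod_nonneg fun i _ =>
      inv_nonneg.2 (zero_le_one.trans (ht i (mem_univ i)).1))
    (by rw [hPint]; exact pow_pos (Real.log_pos hh) r) fun t ht => ?_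
  obtain ⟨hprod_one, hprod_le⟩ := one_le_prod_and_prod_le_pow_of_mem_univ_pi_Icc ht
  set g : ℕ → ℝ := fun j => f (y * (∏ i, t i) ^ ((j : ℝ) / r))
  have hg0 : g 0 = f y := by simp [g]
  rw [← hg0]
  refine abs_neg_one_pow_mul_sum_Icc_sub_le (g := g) hr fun j hj => ?_
  rw [hg0]
  refine hfy _ (mul_pos hy (Real.rpow_pos_of_pos (hprod_pos t ht) _)) <|
    (abs_log_mul_rpow_sub_log_le hy hprod_one (by positivity)
      (div_le_one_of_le₀ (by exact_mod_cast hj) (Nat.cast_nonneg r))).trans ?_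
  simpa only [Real.log_pow, Fintype.card_fin] using Real.log_le_log (hprod_pos t ht) hprod_le

theorem continuousOn_Ioi_of_log_uniform {f : ℝ → ℝ}
    (huc : ∀ ε > (0:ℝ), ∃ δ > (0:ℝ), ∀ u v : ℝ, 0 < u → 0 < v →
      |Real.log u - Real.log v| ≤ δ → |f u - f v| < ε) :
    ContinuousOn f (Ioi 0) := by
  have hexp : Continuous (f ∘ Real.exp) := Metric.continuous_iff.2 fun b ε hε => by
    obtain ⟨δ, hδ, hfδ⟩ := huc ε hε
    refine ⟨δ, hδ, fun a hab => ?_⟩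
    simpa only [Function.comp, Real.dist_eq] using hfδ _ _ (Real.exp_pos a) (Real.exp_pos b)
      (by rw [Real.log_exp, Real.log_exp, ← Real.dist_eq]; exact hab.le)
  refine (hexp.comp_continuousOn (Real.continuousOn_log.mono fun x hx => (ne_of_gt hx))).congr
    fun x hx => ?_
  simp [Real.exp_log (mem_Ioi.1 hx)]

theorem abs_tsum_mul_sub_le {ι : Type*} {a F : ι → ℝ} {c A B η M : ℝ} (s : Set ι)
    (ha : Summable fun k => |a k|) (ha_one : ∑' k, a k = 1) (hM : ∑' k, |a k| ≤ M)
    (hη : ∑' k : s, |a k| ≤ η) (hA : ∀ k, |F k - c| ≤ A) (hB : ∀ k ∉ s, |F k - c| ≤ B)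
    (hA0 : 0 ≤ A) (hB0 : 0 ≤ B) :
    |∑' k, a k * F k - c| ≤ η * A + M * B := by
  have hdev : Summable fun k => |a k * (F k - c)| :=
    ha.mul_right A |>.of_nonneg_of_le (fun _ => abs_nonneg _) fun k => by
      rw [abs_mul]; exact mul_le_mul_of_nonneg_left (hA k) (abs_nonneg _)
  have hcentre : ∑' k, a k * F k - c = ∑' k, a k * (F k - c) := by
    have hac : Summable fun k => a k * c := ha.of_abs.mul_right c
    have haF : Summable fun k => a k * F k :=
      (hdev.of_abs.add hac).congr fun k => by ring
    simp_rw [mul_sub]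
    rw [haF.tsum_sub hac, tsum_mul_right, ha_one, one_mul]
  rw [hcentre]
  calc |∑' k, a k * (F k - c)|
      ≤ ∑' k, |a k * (F k - c)| := by
        simpa only [Real.norm_eq_abs] using
          norm_tsum_le_tsum_norm (f := fun k => a k * (F k - c)) (by simpa only [Real.norm_eq_abs])
    _ = ∑' k : s, |a k * (F k - c)| + ∑' k : ↥sᶜ, |a k * (F k - c)| :=
        (hdev.tsum_subtype_add_tsum_subtype_compl s).symm
    _ ≤ ∑' k : s, |a k| * A + ∑' k : ↥sᶜ, |a k| * B := by
        gcongr with k k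
        · exact hdev.subtype s
        · exact (ha.subtype s).mul_right A
        · rw [abs_mul]; exact mul_le_mul_of_nonneg_left (hA k) (abs_nonneg _)
        · exact hdev.subtype sᶜ
        · exact (ha.subtype sᶜ).mul_right B
        · rw [abs_mul]; exact mul_le_mul_of_nonneg_left (hB k k.2) (abs_nonneg _)
    _ = (∑' k : s, |a k|) * A + (∑' k : ↥sᶜ, |a k|) * B := by rw [tsum_mul_right, tsum_mul_right]
    _ ≤ η * A + M * B := by
        gcongr
        exact (ha.tsum_subtype_le _ sᶜ fun _ => abs_nonneg _).trans hM

namespace IsKernel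

variable {χ : ℝ → ℝ}

theorem tsum_abs_le_M0 (hχ : IsKernel χ) {u : ℝ} (hu : 0 < u) :
    ∑' k : ℤ, |χ (Real.exp (-(k : ℝ)) * u)| ≤ M0 χ :=
  le_ciSup hχ.m0_bdd (⟨u, hu⟩ : Ioi (0 : ℝ))

theorem exists_tsum_abs_far_le (hχ : IsKernel χ) {ε : ℝ} (hε : 0 < ε) :
    ∃ γ : ℝ, ∀ u : ℝ, 0 < u →
      ∑' k : {k : ℤ // γ < |(k : ℝ) - Real.log u|}, |χ (Real.exp (-((k : ℤ) : ℝ)) * u)| ≤ ε := by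
  obtain ⟨γ, hγ⟩ := (hχ.decay.eventually_lt_const hε).exists
  refine ⟨γ, fun u hu => le_trans ?_ hγ.le⟩
  refine le_ciSup (f := fun v : Ioi (0 : ℝ) => ∑' k : {k : ℤ // γ < |(k : ℝ) - Real.log v|},
    |χ (Real.exp (-((k : ℤ) : ℝ)) * v)|) ⟨M0 χ, ?_⟩ ⟨u, hu⟩
  rintro _ ⟨v, rfl⟩
  exact (Summable.tsum_subtype_le _ {k : ℤ | γ < |(k : ℝ) - Real.log v|}
    (fun _ => abs_nonneg _) (hχ.summable_abs v v.2)).trans (hχ.tsum_abs_le_M0 v.2)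

end IsKernel

theorem abs_samplingOp_sub_le {χ : ℝ → ℝ} (hχ : IsKernel χ) {r : ℕ} (hr : 0 < r) {f : ℝ → ℝ}
    (hf : ContinuousOn f (Ioi 0)) {C ε δ γ w x : ℝ} (hC : ∀ y, 0 < y → |f y| ≤ C)
    (hfδ : ∀ u v, 0 < u → 0 < v → |Real.log u - Real.log v| ≤ δ → |f u - f v| ≤ ε)
    (hγ : ∀ u : ℝ, 0 < u →
      ∑' k : {k : ℤ // γ < |(k : ℝ) - Real.log u|}, |χ (Real.exp (-((k : ℤ) : ℝ)) * u)| ≤ ε)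
    (hw : 0 < w) (hrw : r / w ≤ δ) (hγw : γ / w ≤ δ) (hx : 0 < x) :
    |samplingOp χ r f w x - f x| ≤ ε * (2 ^ r * ε + 2 * C) + M0 χ * ((2 ^ r + 1) * ε) := by
  have hu : 0 < x ^ w := Real.rpow_pos_of_pos hx w
  have hε : 0 ≤ ε := (tsum_nonneg fun _ => abs_nonneg _).trans (hγ _ hu)
  have hC0 : 0 ≤ C := (abs_nonneg _).trans (hC x hx)
  have hsteklov : ∀ k : ℤ, |mellinSteklov r f (Real.exp (1 / w)) (Real.exp (k / w))
      - f (Real.exp (k / w))| ≤ 2 ^ r * ε := fun k =>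
    abs_mellinSteklov_sub_le hr hf (Real.one_lt_exp_iff.2 (by positivity)) (Real.exp_pos _)
      fun z hz hzk => hfδ _ _ hz (Real.exp_pos _) <| hzk.trans <| by
        rwa [Real.log_exp, ← mul_div_assoc, mul_one]
  refine abs_tsum_mul_sub_le {k : ℤ | γ < |(k : ℝ) - Real.log (x ^ w)|} (hχ.summable_abs _ hu)
    (hχ.sum_eq_one _ hu) (hχ.tsum_abs_le_M0 hu) (hγ _ hu) (fun k => ?_) (fun k hk => ?_)
    (by positivity) (by positivity)
  · calc _ ≤ |mellinSteklov r f (Real.exp (1 / w)) (Real.exp (k / w)) - f (Real.exp (k / w))|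
          + (|f (Real.exp (k / w))| + |f x|) :=
            (abs_sub_le _ _ _).trans (by gcongr; exact abs_sub _ _)
      _ ≤ 2 ^ r * ε + (C + C) := by gcongr; exacts [hsteklov k, hC _ (Real.exp_pos _), hC x hx]
      _ = 2 ^ r * ε + 2 * C := by ring
  · have hnear : |Real.log (Real.exp (k / w)) - Real.log x| ≤ δ := by
      rw [mem_ofPred_eq, Real.log_rpow hx, not_lt] at hk
      rw [Real.log_exp, show (k : ℝ) / w - Real.log x = (k - w * Real.log x) / w by field_simp,
        abs_div, abs_of_pos hw]
      exact (div_le_div_of_nonneg_right hk hw.le).trans hγw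
    calc _ ≤ |mellinSteklov r f (Real.exp (1 / w)) (Real.exp (k / w)) - f (Real.exp (k / w))|
          + |f (Real.exp (k / w)) - f x| := abs_sub_le _ _ _
      _ ≤ 2 ^ r * ε + ε := add_le_add (hsteklov k) (hfδ _ _ (Real.exp_pos _) hx hnear)
      _ = (2 ^ r + 1) * ε := by ring

theorem supNorm_nonneg (g : ℝ → ℝ) : 0 ≤ supNorm g :=
  Real.iSup_nonneg fun _ => abs_nonneg _

theorem supNorm_le {g : ℝ → ℝ} {c : ℝ} (h : ∀ x, 0 < x → |g x| ≤ c) : supNorm g ≤ c :=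
  ciSup_le fun x => h x x.2

theorem tendsto_nhds_zero_of_forall_eventually_le {ι : Type*} {l : Filter ι} {g : ι → ℝ}
    {φ : ℝ → ℝ} (hφ : Tendsto φ (𝓝[>] 0) (𝓝 0)) (hg0 : ∀ i, 0 ≤ g i)
    (hg : ∀ ε > 0, ∀ᶠ i in l, g i ≤ φ ε) : Tendsto g l (𝓝 0) := by
  refine tendsto_order.2 ⟨fun a ha => Eventually.of_forall fun i => ha.trans_le (hg0 i),
    fun a ha => ?_⟩
  obtain ⟨ε, hεa, hε⟩ := ((hφ.eventually_lt_const ha).and self_mem_nhdsWithin).exists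
  exact (hg ε hε).mono fun i hi => hi.trans_lt hεa

/-- uniform convergence of `E_{w,r}^χ f` for bounded log-uniformly
continuous `f`. -/
theorem stmt_7 (χ : ℝ → ℝ) (hχ : IsKernel χ) (r : ℕ) (hr : 0 < r)
    (f : ℝ → ℝ) (hbdd : ∃ C, ∀ y : ℝ, 0 < y → |f y| ≤ C)
    (huc : ∀ ε > (0:ℝ), ∃ δ > (0:ℝ), ∀ u v : ℝ, 0 < u → 0 < v →
      |Real.log u - Real.log v| ≤ δ → |f u - f v| < ε) :
    Tendsto (fun w => supNorm fun x => samplingOp χ r f w x - f x) atTop (nhds 0) := by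
  obtain ⟨C, hC⟩ := hbdd
  have hf : ContinuousOn f (Ioi 0) := continuousOn_Ioi_of_log_uniform huc
  set φ : ℝ → ℝ := fun ε => ε * (2 ^ r * ε + 2 * C) + M0 χ * ((2 ^ r + 1) * ε)
  have hφ : Tendsto φ (𝓝[>] 0) (𝓝 0) := by
    have : Continuous φ := by fun_prop
    simpa [φ] using (this.tendsto 0).mono_left nhdsWithin_le_nhds
  refine tendsto_nhds_zero_of_forall_eventually_le hφ (fun _ => supNorm_nonneg _) fun ε hε => ?_
  obtain ⟨δ, hδ, hfδ⟩ := huc ε hε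
  obtain ⟨γ, hγ⟩ := hχ.exists_tsum_abs_far_le hε
  have hdiv : ∀ a : ℝ, ∀ᶠ w in atTop, a / w < δ := fun a =>
    (tendsto_const_nhds.div_atTop tendsto_id).eventually_lt_const hδ
  filter_upwards [eventually_gt_atTop 0, hdiv r, hdiv γ] with w hw hrw hγw
  exact supNorm_le fun x hx => abs_samplingOp_sub_le hχ hr hf hC
    (fun u v hu hv h => (hfδ u v hu hv h).le) hγ hw hrw.le hγw.le hx
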